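/- Let n and m be large enough to guarantee the existence of asymmetric graphs on n vertices and on m vertices. Let Φ be any vertex nomination scheme, 𝔬 an obfuscating function, and (ε_i)_{i=1}^m a strictly increasing sequence with ε_i ∈ (0, i/m) for each i. Then there exists a probability distribution F on pairs of graphs on V₁ and V₂ with c = min(n,m) core vertices and a vertex v* ∈ C such that for every k ∈ {1,…,c−1}: L*_k(v*) ≤ ε_{m−k} < 1 − k/m < 1 − ε_k ≤ L_k(Φ, v*), where 1 − k/m represents chance performance. -/

import Mathlib

open Filter MeasureTheory
open scoped ENNReal

namespace VN

/-- `w` lies in the automorphism orbit `I(u;g)` of `u` in the graph `g`. -/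
def InOrbit {V : Type*} (g : SimpleGraph V) (u w : V) : Prop :=
  ∃ σ : SimpleGraph.Iso g g, σ u = w

/-- A graph is asymmetric if its only automorphism is the identity. -/
def IsAsym {V : Type*} (g : SimpleGraph V) : Prop :=
  ∀ σ : SimpleGraph.Iso g g, ∀ v, σ v = v

/-- The obfuscated graph `𝔬(g₂)`: relabel the vertices of `g₂` along the bijection `o`. -/
def obf {m : ℕ} {W : Type*} (o : Fin m ≃ W) (g : SimpleGraph (Fin m)) : SimpleGraph W :=
  SimpleGraph.map o.toEmbedding g

/-- The (1-indexed) rank of `w` in the total ordering of `W` encoded by `T : W ≃ Fin m`. -/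
def vnRank {m : ℕ} {W : Type*} (T : W ≃ Fin m) (w : W) : ℕ := (T w).val + 1

/-- A vertex nomination scheme: to each graph `g₁` on `V₁ = Fin n`, obfuscated graph on `W`,
and vertex of interest in `V₁`, it assigns a total ordering of `W` (encoded as `W ≃ Fin m`),
subject to the consistency property: the set of ranks assigned to the image of each
automorphism orbit of `g₂` does not depend on the obfuscating function used. -/
structure VNScheme (n m : ℕ) (W : Type*) where
  toFun : SimpleGraph (Fin n) → SimpleGraph W → Fin n → (W ≃ Fin m)
  consistent : ∀ (g₁ : SimpleGraph (Fin n)) (g₂ : SimpleGraph (Fin m))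
      (v : Fin n) (o₁ o₂ : Fin m ≃ W) (u : Fin m),
      {r : ℕ | ∃ w, InOrbit g₂ u w ∧ vnRank (toFun g₁ (obf o₁ g₂) v) (o₁ w) = r} =
      {r : ℕ | ∃ w, InOrbit g₂ u w ∧ vnRank (toFun g₁ (obf o₂ g₂) v) (o₂ w) = r}

/-- The level-`k` error `L_k(Φ, v*)` of the scheme `Φ` at the vertex of interest `v` (whose
corresponding vertex in the second graph is `u`), with respect to the distribution `F` on
pairs of graphs and the obfuscating function `o`. -/
noncomputable def vnError {n m : ℕ} {W : Type*}
    (F : PMF (SimpleGraph (Fin n) × SimpleGraph (Fin m)))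
    (Φ : VNScheme n m W) (o : Fin m ≃ W) (v : Fin n) (u : Fin m) (k : ℕ) : ℝ :=
  (F.toOuterMeasure {p | k + 1 ≤ vnRank (Φ.toFun p.1 (obf o p.2) v) (o u)}).toReal

/-- The level-`k` Bayes error `L*_k(v*)`: the infimum of the level-`k` errors over all
vertex nomination schemes. -/
noncomputable def bayesError (n m : ℕ) (W : Type*)
    (F : PMF (SimpleGraph (Fin n) × SimpleGraph (Fin m)))
    (o : Fin m ≃ W) (v : Fin n) (u : Fin m) (k : ℕ) : ℝ :=
  ⨅ Φ : VNScheme n m W, vnError F Φ o v u k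

end VN


/-!
On an asymmetric graph every automorphism orbit is a singleton, so the consistency property forces
a scheme to be equivariant there: relabelling the second graph moves every rank along with its
vertex. Fix an asymmetric graph `g` on `m` vertices and let `E` interpolate `0, ε₁, …, ε_{m-1}, 1`.
With probability `E (j + 1) - E j` the adversary presents `g` relabelled so that the vertex which
`Φ` ranks in position `j` (counting from `0`) becomes the vertex of interest. Then `Φ` ranks it
below `k` with probability `1 - ε_k`, while the scheme that agrees with `Φ` except that on copies
of `g` it reverses `Φ`'s ranking does so with probability `ε_{m-k}`.
-/

namespace VN

open SimpleGraph

theorem IsAsym.inOrbit_iff {V : Type*} {g : SimpleGraph V} (hg : IsAsym g) {u w : V} :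
    InOrbit g u w ↔ w = u := by
  constructor
  · rintro ⟨σ, rfl⟩
    exact hg σ u
  · rintro rfl
    exact ⟨Iso.refl, rfl⟩

theorem IsAsym.subsingleton_iso {V V' : Type*} {g : SimpleGraph V} {h : SimpleGraph V'}
    (hg : IsAsym g) : Subsingleton (h ≃g g) := by
  refine ⟨fun σ τ => RelIso.ext fun x => ?_⟩
  simpa using (hg (σ.symm.trans τ) (σ x)).symm

theorem obf_map_equiv {m : ℕ} {W : Type*} (o : Fin m ≃ W) (e : Fin m ≃ Fin m)
    (g : SimpleGraph (Fin m)) : obf o (g.map e.toEmbedding) = obf (e.trans o) g := by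
  simp only [obf, SimpleGraph.map_map]
  rfl

section Scheme

variable {n m : ℕ} {W : Type*}

theorem VNScheme.apply_obf_eq (Φ : VNScheme n m W) (g₁ : SimpleGraph (Fin n))
    {g : SimpleGraph (Fin m)} (hg : IsAsym g) (v : Fin n) (o₁ o₂ : Fin m ≃ W) (w : Fin m) :
    Φ.toFun g₁ (obf o₁ g) v (o₁ w) = Φ.toFun g₁ (obf o₂ g) v (o₂ w) := by
  have h := Φ.consistent g₁ g v o₁ o₂ w
  simp only [hg.inOrbit_iff, exists_eq_left] at h
  have := (Set.ext_iff.1 h (vnRank (Φ.toFun g₁ (obf o₁ g) v) (o₁ w))).1 rfl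
  simp only [vnRank, Set.mem_ofPred_eq, add_left_inj] at this
  exact Fin.ext this.symm

theorem VNScheme.apply_obf_map_swap (Φ : VNScheme n m W) (g₁ : SimpleGraph (Fin n))
    {g : SimpleGraph (Fin m)} (hg : IsAsym g) (v : Fin n) (o : Fin m ≃ W) (u w : Fin m) :
    Φ.toFun g₁ (obf o (g.map (Equiv.swap w u).toEmbedding)) v (o u) =
      Φ.toFun g₁ (obf o g) v (o w) := by
  rw [obf_map_equiv, ← Φ.apply_obf_eq g₁ hg v ((Equiv.swap w u).trans o) o w,
    Equiv.trans_apply, Equiv.swap_apply_left]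

end Scheme

section Override

variable {n m : ℕ} {W : Type*} {g : SimpleGraph (Fin m)}

open Classical in
noncomputable def VNScheme.overrideOn (Φ : VNScheme n m W) (hg : IsAsym g)
    (T : Fin m ≃ Fin m) : VNScheme n m W where
  toFun g₁ h v := if hc : Nonempty (h ≃g g) then hc.some.toEquiv.trans T else Φ.toFun g₁ h v
  consistent g₁ g₂ v o₁ o₂ u := by
    have hiso (o : Fin m ≃ W) : Nonempty (obf o g₂ ≃g g) ↔ Nonempty (g₂ ≃g g) :=
      ⟨fun ⟨σ⟩ => ⟨(Iso.map o g₂).trans σ⟩, fun ⟨σ⟩ => ⟨(Iso.map o g₂).symm.trans σ⟩⟩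
    by_cases hc : Nonempty (g₂ ≃g g)
    · have h₁ := (hiso o₁).2 hc
      have h₂ := (hiso o₂).2 hc
      have key (w : Fin m) : h₁.some (o₁ w) = h₂.some (o₂ w) := by
        have := hg.subsingleton_iso.elim ((Iso.map o₁ g₂).trans h₁.some)
          ((Iso.map o₂ g₂).trans h₂.some)
        exact congrArg (· w) this
      simp only [dif_pos h₁, dif_pos h₂, vnRank, Equiv.trans_apply, RelIso.coe_fn_toEquiv, key]
    · simp only [dif_neg (mt (hiso o₁).1 hc), dif_neg (mt (hiso o₂).1 hc)]
      exact Φ.consistent g₁ g₂ v o₁ o₂ u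

theorem VNScheme.overrideOn_apply_obf (Φ : VNScheme n m W) (hg : IsAsym g) (T : Fin m ≃ Fin m)
    (g₁ : SimpleGraph (Fin n)) (o : Fin m ≃ W) (v : Fin n) :
    (Φ.overrideOn hg T).toFun g₁ (obf o g) v = o.symm.trans T := by
  have hc : Nonempty (obf o g ≃g g) := ⟨(Iso.map o g).symm⟩
  simp only [overrideOn, dif_pos hc]
  rw [hg.subsingleton_iso.elim hc.some (Iso.map o g).symm]
  rfl

end Override

section CDF

open Finset

variable {m : ℕ} {E : ℕ → ℝ}

theorem sum_fin_sub_eq_one (hE0 : E 0 = 0) (hEm : E m = 1) :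
    ∑ j : Fin m, (E (j + 1) - E j) = 1 := by
  rw [Fin.sum_univ_eq_sum_range (fun i => E (i + 1) - E i), sum_range_sub, hEm, hE0, sub_zero]

noncomputable def pmfOfCDF (hE : Monotone E) (hE0 : E 0 = 0) (hEm : E m = 1) : PMF (Fin m) :=
  PMF.ofFintype (fun j => ENNReal.ofReal (E (j + 1) - E j)) <| by
    rw [← ENNReal.ofReal_sum_of_nonneg fun j _ => sub_nonneg.2 (hE j.val.le_succ),
      sum_fin_sub_eq_one hE0 hEm, ENNReal.ofReal_one]

theorem toReal_pmfOfCDF_toOuterMeasure (hE : Monotone E) (hE0 : E 0 = 0) (hEm : E m = 1)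
    (p : ℕ → Prop) [DecidablePred p] :
    ((pmfOfCDF hE hE0 hEm).toOuterMeasure {j | p j}).toReal =
      ∑ i ∈ range m with p i, (E (i + 1) - E i) := by
  rw [PMF.toOuterMeasure_apply_fintype, ENNReal.toReal_sum fun j _ => ?_, sum_filter,
    ← Fin.sum_univ_eq_sum_range (fun i => if p i then E (i + 1) - E i else 0)]
  · refine sum_congr rfl fun j _ => ?_
    by_cases hj : p j <;>
      simp [Set.indicator, hj, pmfOfCDF, ENNReal.toReal_ofReal, sub_nonneg.2 (hE j.val.le_succ)]
  · exact ne_top_of_le_ne_top ((pmfOfCDF hE hE0 hEm).apply_ne_top j) (Set.indicator_le_self _ _ j)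

theorem toReal_pmfOfCDF_lt (hE : Monotone E) (hE0 : E 0 = 0) (hEm : E m = 1) {t : ℕ}
    (ht : t ≤ m) : ((pmfOfCDF hE hE0 hEm).toOuterMeasure {j | (j : ℕ) < t}).toReal = E t := by
  rw [toReal_pmfOfCDF_toOuterMeasure hE hE0 hEm (· < t)]
  have : (range m).filter (· < t) = range t := by
    ext i; simp only [mem_filter, mem_range]; omega
  rw [this, sum_range_sub, hE0, sub_zero]

theorem toReal_pmfOfCDF_ge (hE : Monotone E) (hE0 : E 0 = 0) (hEm : E m = 1) {t : ℕ}
    (ht : t ≤ m) : ((pmfOfCDF hE hE0 hEm).toOuterMeasure {j | t ≤ (j : ℕ)}).toReal = 1 - E t := by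
  rw [toReal_pmfOfCDF_toOuterMeasure hE hE0 hEm (t ≤ ·)]
  have : (range m).filter (t ≤ ·) = Ico t m := by
    ext i; simp only [mem_filter, mem_range, mem_Ico]; omega
  rw [this, sum_Ico_eq_sub _ ht, sum_range_sub, sum_range_sub, hEm]
  ring

end CDF

noncomputable def cdfOfSeq (m : ℕ) (ε : ℕ → ℝ) (t : ℕ) : ℝ :=
  if t = 0 then 0 else if t < m then ε t else 1

section CdfOfSeq

variable {m : ℕ} {ε : ℕ → ℝ}

theorem cdfOfSeq_zero : cdfOfSeq m ε 0 = 0 := if_pos rfl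

theorem cdfOfSeq_of_le {t : ℕ} (h₁ : 1 ≤ t) (h₂ : m ≤ t) : cdfOfSeq m ε t = 1 := by
  rw [cdfOfSeq, if_neg (by omega), if_neg (by omega)]

theorem cdfOfSeq_of_lt {t : ℕ} (h₁ : 1 ≤ t) (h₂ : t < m) : cdfOfSeq m ε t = ε t := by
  rw [cdfOfSeq, if_neg (by omega), if_pos h₂]

theorem monotone_cdfOfSeq (hmono : MonotoneOn ε (Set.Ico 1 m))
    (hnonneg : ∀ t ∈ Set.Ico 1 m, 0 ≤ ε t) (hle : ∀ t ∈ Set.Ico 1 m, ε t ≤ 1) :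
    Monotone (cdfOfSeq m ε) := by
  refine monotone_nat_of_le_succ fun t => ?_
  rcases Nat.eq_zero_or_pos t with rfl | ht
  · rw [cdfOfSeq_zero]
    rcases lt_or_ge 1 m with h | h
    · exact (cdfOfSeq_of_lt le_rfl h).symm ▸ hnonneg 1 ⟨le_rfl, h⟩
    · exact (cdfOfSeq_of_le le_rfl h).symm ▸ zero_le_one
  rcases lt_or_ge (t + 1) m with h | h
  · rw [cdfOfSeq_of_lt ht (by omega), cdfOfSeq_of_lt (by omega) h]
    exact hmono ⟨ht, by omega⟩ ⟨by omega, h⟩ (by omega)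
  rw [cdfOfSeq_of_le (by omega) h]
  rcases lt_or_ge t m with h' | h'
  · exact (cdfOfSeq_of_lt ht h').symm ▸ hle t ⟨ht, h'⟩
  · exact (cdfOfSeq_of_le ht h').le

end CdfOfSeq

section Adversary

variable {n m : ℕ} {W : Type*}

theorem bayesError_le_vnError (F : PMF (SimpleGraph (Fin n) × SimpleGraph (Fin m)))
    (Φ : VNScheme n m W) (o : Fin m ≃ W) (v : Fin n) (u : Fin m) (k : ℕ) :
    bayesError n m W F o v u k ≤ vnError F Φ o v u k :=
  ciInf_le ⟨0, by rintro _ ⟨Ψ, rfl⟩; exact ENNReal.toReal_nonneg⟩ Φ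

theorem exists_errors_eq_of_isAsym (Φ : VNScheme n m W) (g₁ : SimpleGraph (Fin n))
    {g : SimpleGraph (Fin m)} (hg : IsAsym g) (v : Fin n) (u : Fin m) (o : Fin m ≃ W)
    (q : PMF (Fin m)) :
    ∃ (F : PMF (SimpleGraph (Fin n) × SimpleGraph (Fin m))) (Ψ : VNScheme n m W), ∀ k : ℕ,
      vnError F Φ o v u k = (q.toOuterMeasure {j | k ≤ (j : ℕ)}).toReal ∧
      vnError F Ψ o v u k = (q.toOuterMeasure {j | (j : ℕ) < m - k}).toReal := by
  let R : Fin m ≃ Fin m := o.trans (Φ.toFun g₁ (obf o g) v)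
  let sample (j : Fin m) := (g₁, g.map (Equiv.swap (R.symm j) u).toEmbedding)
  have hrank (Ψ : VNScheme n m W) (j : Fin m) :
      vnRank (Ψ.toFun (sample j).1 (obf o (sample j).2) v) (o u) =
        (Ψ.toFun g₁ (obf o g) v (o (R.symm j)) : ℕ) + 1 :=
    congrArg (fun i : Fin m => (i : ℕ) + 1) (Ψ.apply_obf_map_swap g₁ hg v o u _)
  refine ⟨q.map sample, Φ.overrideOn hg (R.trans Fin.revPerm), fun k => ⟨?_, ?_⟩⟩ <;>
    rw [vnError, PMF.toOuterMeasure_map_apply] <;> congr 2 <;> ext j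
  · have : Φ.toFun g₁ (obf o g) v (o (R.symm j)) = j := R.apply_symm_apply j
    simp only [Set.mem_preimage, Set.mem_ofPred_eq, hrank, this]
    omega
  · simp only [Set.mem_preimage, Set.mem_ofPred_eq, hrank, Φ.overrideOn_apply_obf,
      Equiv.trans_apply, Equiv.symm_apply_apply, Equiv.apply_symm_apply, Fin.revPerm_apply,
      Fin.val_rev]
    omega

end Adversary

end VN

theorem arbitrarily_poor_performance_general
    {n m : ℕ}
    (hgm : ∃ g : SimpleGraph (Fin m), VN.IsAsym g)
    (hn : 1 ≤ n) (hm : 1 ≤ m)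
    {W : Type}
    (Φ : VN.VNScheme n m W) (o : Fin m ≃ W)
    (ε : ℕ → ℝ)
    (hε : ∀ i, 1 ≤ i → i ≤ m → 0 < ε i ∧ ε i < (i : ℝ) / m)
    (hεmono : ∀ i j, 1 ≤ i → i < j → j ≤ m → ε i < ε j) :
    ∃ (F : PMF (SimpleGraph (Fin n) × SimpleGraph (Fin m))) (v : Fin n) (u : Fin m),
      (v : ℕ) < min n m ∧ (u : ℕ) = (v : ℕ) ∧
      ∀ k : ℕ, 1 ≤ k → k ≤ min n m - 1 →
        VN.bayesError n m W F o v u k ≤ ε (m - k) ∧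
        ε (m - k) < 1 - (k : ℝ) / m ∧
        1 - (k : ℝ) / m < 1 - ε k ∧
        1 - ε k ≤ VN.vnError F Φ o v u k := by
  obtain ⟨g, hg⟩ := hgm
  have hE : Monotone (VN.cdfOfSeq m ε) := VN.monotone_cdfOfSeq
    (fun i hi j hj hij => hij.eq_or_lt.elim (fun h => h ▸ le_rfl)
      fun h => (hεmono i j hi.1 h hj.2.le).le)
    (fun t ht => (hε t ht.1 ht.2.le).1.le)
    (fun t ht => (hε t ht.1 ht.2.le).2.le.trans
      (div_le_one_of_le₀ (by exact_mod_cast ht.2.le) (Nat.cast_nonneg m)))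
  obtain ⟨F, Ψ, hF⟩ := VN.exists_errors_eq_of_isAsym Φ ⊥ hg ⟨0, hn⟩ ⟨0, hm⟩ o
    (VN.pmfOfCDF hE VN.cdfOfSeq_zero (VN.cdfOfSeq_of_le hm le_rfl))
  refine ⟨F, ⟨0, hn⟩, ⟨0, hm⟩, lt_min hn hm, rfl, fun k hk hkc => ?_⟩
  have hkm : k < m := by omega
  obtain ⟨hΦ, hΨ⟩ := hF k
  rw [VN.toReal_pmfOfCDF_ge _ _ _ hkm.le, VN.cdfOfSeq_of_lt hk hkm] at hΦ
  rw [VN.toReal_pmfOfCDF_lt _ _ _ (Nat.sub_le m k),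
    VN.cdfOfSeq_of_lt (by omega) (by omega)] at hΨ
  have hεk := (hε k hk hkm.le).2
  have hεmk := (hε (m - k) (by omega) (Nat.sub_le m k)).2
  rw [Nat.cast_sub hkm.le, sub_div, div_self (by positivity)] at hεmk
  exact ⟨hΨ ▸ VN.bayesError_le_vnError F Ψ o _ _ k, hεmk, by linarith, hΦ.ge⟩

/-- Suppose asymmetric graphs exist on `n` and on `m` vertices. For any vertex
nomination scheme `Φ`, any obfuscating function `𝔬`, and any strictly increasing sequence
`(ε_i)_{i=1}^m` with `ε_i ∈ (0, i/m)`, there is a distribution `F` on pairs of graphs with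
`c = min n m` core vertices and a vertex of interest `v* ∈ C` (with corresponding vertex `u` in
the second graph) such that for every `k ∈ {1,…,c−1}`:
`L*_k(v*) ≤ ε_{m−k} < 1 − k/m < 1 − ε_k ≤ L_k(Φ, v*)`. -/
theorem arbitrarily_poor_performance
    {n m : ℕ}
    (hgn : ∃ g : SimpleGraph (Fin n), VN.IsAsym g)
    (hgm : ∃ g : SimpleGraph (Fin m), VN.IsAsym g)
    (hn : 1 ≤ n) (hm : 1 ≤ m)
    {W : Type} (hW : Nonempty (Fin m ≃ W))
    (Φ : VN.VNScheme n m W) (o : Fin m ≃ W)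
    (ε : ℕ → ℝ)
    (hε : ∀ i, 1 ≤ i → i ≤ m → 0 < ε i ∧ ε i < (i : ℝ) / m)
    (hεmono : ∀ i j, 1 ≤ i → i < j → j ≤ m → ε i < ε j) :
    ∃ (F : PMF (SimpleGraph (Fin n) × SimpleGraph (Fin m))) (v : Fin n) (u : Fin m),
      (v : ℕ) < min n m ∧ (u : ℕ) = (v : ℕ) ∧
      ∀ k : ℕ, 1 ≤ k → k ≤ min n m - 1 →
        VN.bayesError n m W F o v u k ≤ ε (m - k) ∧
        ε (m - k) < 1 - (k : ℝ) / m ∧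
        1 - (k : ℝ) / m < 1 - ε k ∧
        1 - ε k ≤ VN.vnError F Φ o v u k :=
  arbitrarily_poor_performance_general hgm hn hm Φ o ε hε hεmono
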